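/- Let B = {a, b, x, y} be the four-element band with multiplication: aa = a, ab = y, ax = x, ay = y; ba = y, bb = b, bx = x, by = y; xa = x, xb = y, xx = x, xy = y; ya = y, yb = y, yx = x, yy = y. Then B is a semigroup (in which every element is idempotent), and in IG(B) the element ā·b̄ is not R*-related to any idempotent of IG(B); in particular IG(B) is not an abundant semigroup. -/

import Mathlib

/-! Common definitions: free idempotent generated semigroups over bands,
generalised Green's relations, and abundancy notions. -/

/-- `(e, f)` is a *basic pair* if `ef ∈ {e,f}` or `fe ∈ {e,f}`. -/
def basicPair {B : Type*} [Mul B] (e f : B) : Prop :=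
  e * f = e ∨ e * f = f ∨ f * e = e ∨ f * e = f

/-- The defining congruence of the free idempotent generated semigroup `IG B`:
the congruence on the free semigroup on `{ē : e ∈ B}` generated by the relations
`ē f̄ = (ef)‾` for basic pairs `(e, f)`. -/
def igCon (B : Type*) [Semigroup B] : Con (FreeSemigroup B) :=
  conGen fun w₁ w₂ => ∃ e f : B, basicPair e f ∧
    w₁ = FreeSemigroup.of e * FreeSemigroup.of f ∧ w₂ = FreeSemigroup.of (e * f)

/-- The free idempotent generated semigroup over a band `B`. -/
abbrev IG (B : Type*) [Semigroup B] := (igCon B).Quotient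

/-- The canonical generator `ē` of `IG B`. -/
def igOf {B : Type*} [Semigroup B] (e : B) : IG B :=
  ((FreeSemigroup.of e : FreeSemigroup B) : (igCon B).Quotient)

/-- `prodSeq x a b = x a * x (a+1) * ⋯ * x b` (it is `x a` when `b ≤ a`). -/
def prodSeq {M : Type*} [Mul M] (x : ℕ → M) (a b : ℕ) : M :=
  (List.range (b - a)).foldl (fun acc i => acc * x (a + i + 1)) (x a)

/-- The word `x̄_a x̄_{a+1} ⋯ x̄_b` in the free semigroup on `{ē : e ∈ B}`. -/
def freeWord {B : Type*} (x : ℕ → B) (a b : ℕ) : FreeSemigroup B :=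
  prodSeq (fun i => FreeSemigroup.of (x i)) a b

/-- The element `x̄_a x̄_{a+1} ⋯ x̄_b` of `IG B`. -/
def igWord {B : Type*} [Semigroup B] (x : ℕ → B) (a b : ℕ) : IG B :=
  ((freeWord x a b : FreeSemigroup B) : (igCon B).Quotient)

/-- Green's relation `𝓡`: `a 𝓡 b` iff `a = b` or `as = b`, `bt = a` for some `s, t`. -/
def GreenR {S : Type*} [Semigroup S] (a b : S) : Prop :=
  a = b ∨ ∃ s t : S, a * s = b ∧ b * t = a

/-- Green's relation `𝓛`: `a 𝓛 b` iff `a = b` or `sa = b`, `tb = a` for some `s, t`. -/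
def GreenL {S : Type*} [Semigroup S] (a b : S) : Prop :=
  a = b ∨ ∃ s t : S, s * a = b ∧ t * b = a

/-- `a 𝓡* b` iff for all `x, y ∈ S¹`, `xa = ya ↔ xb = yb`. -/
def RStar {S : Type*} [Semigroup S] (a b : S) : Prop :=
  ∀ x y : WithOne S,
    x * (a : WithOne S) = y * (a : WithOne S) ↔ x * (b : WithOne S) = y * (b : WithOne S)

/-- `a 𝓛* b` iff for all `x, y ∈ S¹`, `ax = ay ↔ bx = by`. -/
def LStar {S : Type*} [Semigroup S] (a b : S) : Prop :=
  ∀ x y : WithOne S,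
    (a : WithOne S) * x = (a : WithOne S) * y ↔ (b : WithOne S) * x = (b : WithOne S) * y

/-- `a 𝓡̃ b` iff for every idempotent `e`, `ea = a ↔ eb = b`. -/
def RTilde {S : Type*} [Semigroup S] (a b : S) : Prop :=
  ∀ e : S, IsIdempotentElem e → (e * a = a ↔ e * b = b)

/-- `a 𝓛̃ b` iff for every idempotent `e`, `ae = a ↔ be = b`. -/
def LTilde {S : Type*} [Semigroup S] (a b : S) : Prop :=
  ∀ e : S, IsIdempotentElem e → (a * e = a ↔ b * e = b)

/-- A semigroup is *abundant* if every `𝓡*`-class and every `𝓛*`-class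
contains an idempotent. -/
def Abundant (S : Type*) [Semigroup S] : Prop :=
  ∀ a : S, (∃ e : S, IsIdempotentElem e ∧ RStar a e) ∧
    (∃ e : S, IsIdempotentElem e ∧ LStar a e)

/-- A semigroup is *weakly abundant* if every `𝓡̃`-class and every `𝓛̃`-class
contains an idempotent. -/
def WeaklyAbundant (S : Type*) [Semigroup S] : Prop :=
  ∀ a : S, (∃ e : S, IsIdempotentElem e ∧ RTilde a e) ∧
    (∃ e : S, IsIdempotentElem e ∧ LTilde a e)

/-- On a band, `x` and `y` are `𝒟`-equivalent iff `xyx = x` and `yxy = y`. -/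
def dEquiv {B : Type*} [Mul B] (x y : B) : Prop :=
  x * y * x = x ∧ y * x * y = y

/-- On a band, `x` and `y` are `𝒥`-incomparable iff `xyx ≠ x` and `yxy ≠ y`. -/
def jIncomp {B : Type*} [Mul B] (x y : B) : Prop :=
  x * y * x ≠ x ∧ y * x * y ≠ y

/-- One step of the reduction system induced by the presentation of `IG B`:
replace a factor `ē f̄`, with `(e,f)` a basic pair, by `(ef)‾`. -/
def RedStep {B : Type*} [Semigroup B] (w w' : FreeSemigroup B) : Prop :=
  ∃ (p q : List B) (e f : B), basicPair e f ∧
    w.head :: w.tail = p ++ e :: f :: q ∧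
    w'.head :: w'.tail = p ++ (e * f) :: q

/-- A word is in *normal form* (irreducible) if no reduction step applies. -/
def IsNF {B : Type*} [Semigroup B] (w : FreeSemigroup B) : Prop :=
  ∀ w', ¬ RedStep w w'

/-- `x̄₁ ⋯ x̄ₙ` (letters `x 1, …, x n`) is in *almost normal form* witnessed by
block boundaries `idx 0 = 0 < idx 1 < ⋯ < idx r = n`: within each block all
letters are `𝒟`-equivalent, and letters in adjacent blocks are incomparable. -/
def AlmostNF {B : Type*} [Mul B] (x : ℕ → B) (n r : ℕ) (idx : ℕ → ℕ) : Prop :=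
  1 ≤ r ∧ idx 0 = 0 ∧ idx r = n ∧
  (∀ k < r, idx k < idx (k + 1)) ∧
  (∀ k < r, ∀ p q : ℕ, idx k < p → p ≤ idx (k + 1) → idx k < q → q ≤ idx (k + 1) →
    dEquiv (x p) (x q)) ∧
  (∀ k : ℕ, k + 1 < r → ∀ p q : ℕ, idx k < p → p ≤ idx (k + 1) →
    idx (k + 1) < q → q ≤ idx (k + 2) → jIncomp (x p) (x q))

/-- Condition (P) for `IG B`. -/
def CondP (B : Type*) [Semigroup B] : Prop :=
  ∀ (n m r : ℕ) (u v : ℕ → B) (iu iv : ℕ → ℕ),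
    AlmostNF u n r iu → AlmostNF v m r iv →
    igWord u 1 n = igWord v 1 m →
    ((∀ s : ℕ, 1 ≤ s → s ≤ r →
        (u (iu s) * v (iv s) = u (iu s) ∧ v (iv s) * u (iu s) = v (iv s)) →
        igWord u 1 (iu s) = igWord v 1 (iv s)) ∧
      (∀ t : ℕ, t + 1 ≤ r →
        (u (iu t + 1) * v (iv t + 1) = v (iv t + 1) ∧
          v (iv t + 1) * u (iu t + 1) = u (iu t + 1)) →
        igWord u (iu t + 1) n = igWord v (iv t + 1) m))

/-- A normal band is *pliant* if for every `𝒟`-class `D` there is `c ∈ D` with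
`u e u = c` for every `e ∈ D` and every `u` strictly `𝒥`-above `D`. -/
def Pliant (B : Type*) [Mul B] : Prop :=
  ∀ d : B, ∃ c : B, dEquiv c d ∧
    ∀ e u : B, dEquiv e d → (e * u * e = e ∧ u * e * u ≠ u) → u * e * u = c

/-- The four-element band `B = {a, b, x, y}` of Section 5 of the paper. -/
inductive B4 : Type
  | a | b | x | y
  deriving DecidableEq

instance : Fintype B4 :=
  ⟨⟨↑[B4.a, B4.b, B4.x, B4.y], by decide⟩, fun p => by cases p <;> decide⟩

open B4 in
/-- The multiplication table of `B4`. -/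
def B4.mul : B4 → B4 → B4
  | a, a => a | a, b => y | a, x => x | a, y => y
  | b, a => y | b, b => b | b, x => x | b, y => y
  | x, a => x | x, b => y | x, x => x | x, y => y
  | y, a => y | y, b => y | y, x => x | y, y => y

instance : Mul B4 := ⟨B4.mul⟩

instance : Semigroup B4 where
  mul_assoc := by decide

/-!
`IG B4` has a concrete model: the alternating words `āb̄ā⋯` and `b̄āb̄⋯` together with `x̄` and
`ȳ`, where right multiplication by `x̄` or `ȳ` absorbs everything and `x̄ w` is `x̄` for `w = ā`
and `ȳ` otherwise. The presentation maps into the model and reading model elements back as words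
gives a left inverse, so the model is faithful and the only idempotents of `IG B4` are the four
generators. Each of them is separated from `āb̄` by a pair of left multipliers from `IG B4¹`:
`x̄, ȳ` agree on `āb̄` but not on `ā`; `1, ā` agree on `āb̄` but not on `b̄`; and `1, b̄` agree
on `x̄` and on `ȳ` but not on `āb̄`.
-/

instance {α : Type*} [DecidableEq α] : DecidableEq (WithOne α) :=
  inferInstanceAs (DecidableEq (Option α))

theorem Bool.bodd_toNat (c : Bool) : c.toNat.bodd = c := by cases c <;> rfl

namespace IG

variable {B : Type*} [Semigroup B]

theorem igOf_mul_igOf {e f : B} (h : basicPair e f) : igOf e * igOf f = igOf (e * f) :=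
  (Con.eq _).2 (ConGen.Rel.of _ _ ⟨e, f, h, rfl, rfl⟩)

theorem igOf_mul_igOf_of_mul_eq_left {e f : B} (h : e * f = e) : igOf e * igOf f = igOf e := by
  rw [igOf_mul_igOf (Or.inl h), h]

theorem igOf_mul_igOf_of_mul_eq_right {e f : B} (h : e * f = f) :
    igOf e * igOf f = igOf f := by
  rw [igOf_mul_igOf (Or.inr (Or.inl h)), h]

@[elab_as_elim]
theorem induction_on {P : IG B → Prop} (w : IG B) (of : ∀ e, P (igOf e))
    (mul : ∀ e w, P w → P (igOf e * w)) : P w :=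
  Con.induction_on w fun u => FreeSemigroup.recOnMul u of fun e _ _ ih => mul e _ ih

variable {T : Type*} [Semigroup T]

def lift (φ : B → T) (hφ : ∀ e f, basicPair e f → φ e * φ f = φ (e * f)) : IG B →ₙ* T where
  toFun := Quotient.lift (FreeSemigroup.lift φ) fun _ _ h =>
    (Con.conGen_le (c := Con.ker (FreeSemigroup.lift φ)).2 (by
      rintro _ _ ⟨e, f, hef, rfl, rfl⟩
      simp only [Con.ker_rel, map_mul, FreeSemigroup.lift_of, hφ e f hef]) h :)
  map_mul' u v := Con.induction_on₂ u v fun _ _ => map_mul (FreeSemigroup.lift φ) _ _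

theorem lift_igOf (φ : B → T) (hφ : ∀ e f, basicPair e f → φ e * φ f = φ (e * f)) (e : B) :
    lift φ hφ (igOf e) = φ e :=
  rfl

end IG

namespace B4

def letter : Bool → B4
  | false => a
  | true => b

/-- `alt f n` is the alternating word in `ā, b̄` with `n + 1` letters starting with `letter f`;
its last letter is `letter (xor f n.bodd)`. -/
inductive IGModel : Type
  | alt (start : Bool) (changes : ℕ)
  | x
  | y
  deriving DecidableEq

namespace IGModel

def mul : IGModel → IGModel → IGModel
  | _, x => x
  | _, y => y
  | alt f n, alt g m => alt f (n + m + (xor (xor f n.bodd) g).toNat)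
  | x, alt g m => if g = false ∧ m = 0 then x else y
  | y, alt _ _ => y

instance : Mul IGModel := ⟨mul⟩

@[simp] theorem alt_mul_alt (f g : Bool) (n m : ℕ) :
    alt f n * alt g m = alt f (n + m + (xor (xor f n.bodd) g).toNat) := rfl
@[simp] theorem mul_x (s : IGModel) : s * x = x := by cases s <;> rfl
@[simp] theorem mul_y (s : IGModel) : s * y = y := by cases s <;> rfl
@[simp] theorem x_mul_alt (g : Bool) (m : ℕ) :
    x * alt g m = if g = false ∧ m = 0 then x else y := rfl
@[simp] theorem y_mul_alt (g : Bool) (m : ℕ) : y * alt g m = y := rfl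

instance : Semigroup IGModel where
  mul_assoc s t u := by
    cases u with
    | x => simp
    | y => simp
    | alt h k =>
      cases t with
      | x => by_cases hc : h = false ∧ k = 0 <;> simp [hc]
      | y => simp
      | alt g m =>
        cases s with
        | y => simp
        | x => cases g <;> cases h <;> rcases m with _ | m <;> simp
        | alt f n =>
          simp only [alt_mul_alt, Nat.bodd_add, Bool.bodd_toNat, alt.injEq, true_and]
          cases f <;> cases g <;> cases h <;> cases n.bodd <;> cases m.bodd <;> simp <;> omega

end IGModel

open IG IGModel

def gen : B4 → IGModel
  | a => alt false 0
  | b => alt true 0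
  | x => IGModel.x
  | y => IGModel.y

theorem gen_mul_gen_of_basicPair :
    ∀ e f : B4, basicPair e f → gen e * gen f = gen (e * f) := by
  unfold basicPair; decide

def toModel : IG B4 →ₙ* IGModel := IG.lift gen gen_mul_gen_of_basicPair

theorem toModel_igOf (e : B4) : toModel (igOf e) = gen e :=
  lift_igOf gen gen_mul_gen_of_basicPair e

def altWord : Bool → ℕ → IG B4
  | f, 0 => igOf (letter f)
  | f, n + 1 => igOf (letter f) * altWord (!f) n

def ofModel : IGModel → IG B4
  | alt f n => altWord f n
  | IGModel.x => igOf x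
  | IGModel.y => igOf y

theorem letter_mul_altWord_self (f : Bool) (n : ℕ) :
    igOf (letter f) * altWord f n = altWord f n := by
  have h : igOf (letter f) * igOf (letter f) = igOf (letter f) :=
    igOf_mul_igOf_of_mul_eq_left (by cases f <;> rfl)
  cases n with
  | zero => exact h
  | succ n => rw [altWord, ← mul_assoc, h]

theorem y_mul_altWord (f : Bool) (n : ℕ) : igOf y * altWord f n = igOf y := by
  have h (f : Bool) : igOf y * igOf (letter f) = igOf y :=
    igOf_mul_igOf_of_mul_eq_left (by cases f <;> rfl)
  induction n generalizing f with
  | zero => exact h f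
  | succ n ih => rw [altWord, ← mul_assoc, h, ih]

theorem x_mul_altWord_true (n : ℕ) : igOf x * altWord true n = igOf y := by
  have hxb : igOf x * igOf b = igOf y := igOf_mul_igOf (Or.inr (Or.inr (Or.inl rfl)))
  cases n with
  | zero => exact hxb
  | succ n => rw [altWord, ← mul_assoc, letter, hxb, y_mul_altWord]

theorem x_mul_altWord (f : Bool) (n : ℕ) :
    igOf x * altWord f n = if f = false ∧ n = 0 then igOf x else igOf y := by
  have hxa : igOf x * igOf a = igOf x := igOf_mul_igOf_of_mul_eq_left rfl
  rcases f with _ | _ <;> rcases n with _ | n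
  · exact hxa
  · rw [altWord, ← mul_assoc, letter, hxa, Bool.not_false, x_mul_altWord_true]; rfl
  all_goals rw [x_mul_altWord_true]; rfl

theorem ofModel_alt_zero_mul_alt (f g : Bool) (m : ℕ) :
    ofModel (alt f 0 * alt g m) = igOf (letter f) * altWord g m := by
  rcases f with _ | _ <;> rcases g with _ | _ <;>
    simp only [alt_mul_alt, Nat.bodd_zero, Bool.xor_false, Bool.xor_true, Bool.xor_self,
      Bool.not_false, Bool.toNat_false, Bool.toNat_true, Nat.zero_add,
      Nat.add_zero, ofModel, letter_mul_altWord_self] <;> rfl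

theorem ofModel_gen_mul (e : B4) (s : IGModel) :
    ofModel (gen e * s) = igOf e * ofModel s := by
  cases s with
  | x => exact (igOf_mul_igOf_of_mul_eq_right (by cases e <;> rfl)).symm
  | y => exact (igOf_mul_igOf_of_mul_eq_right (by cases e <;> rfl)).symm
  | alt g m =>
    cases e with
    | a => exact ofModel_alt_zero_mul_alt false g m
    | b => exact ofModel_alt_zero_mul_alt true g m
    | x => rw [gen, x_mul_alt, apply_ite ofModel]; exact (x_mul_altWord g m).symm
    | y => exact (y_mul_altWord g m).symm

theorem ofModel_toModel (w : IG B4) : ofModel (toModel w) = w := by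
  induction w using IG.induction_on with
  | of e => cases e <;> rfl
  | mul e w ih => rw [map_mul, toModel_igOf, ofModel_gen_mul, ih]

theorem toModel_injective : Function.Injective toModel :=
  Function.LeftInverse.injective ofModel_toModel

theorem IGModel.exists_eq_gen_of_isIdempotentElem {s : IGModel} (hs : IsIdempotentElem s) :
    ∃ e, s = gen e := by
  cases s with
  | x => exact ⟨B4.x, rfl⟩
  | y => exact ⟨B4.y, rfl⟩
  | alt f n =>
    have hn : n = 0 := by
      rw [IsIdempotentElem, alt_mul_alt, alt.injEq] at hs
      omega
    subst hn
    cases f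
    exacts [⟨a, rfl⟩, ⟨b, rfl⟩]

theorem exists_eq_igOf_of_isIdempotentElem {w : IG B4} (hw : IsIdempotentElem w) :
    ∃ e, w = igOf e := by
  obtain ⟨e, he⟩ := IGModel.exists_eq_gen_of_isIdempotentElem (hw.map toModel)
  exact ⟨e, toModel_injective he⟩

theorem withOne_eq_iff_map_toModel_eq {p q : WithOne (IG B4)} :
    p = q ↔ WithOne.mapMulHom toModel p = WithOne.mapMulHom toModel q :=
  (WithOne.mapMulHom_injective toModel_injective).eq_iff.symm

theorem not_rStar_igOf_mul_igOf (e : B4) : ¬ RStar (igOf a * igOf b) (igOf e) := by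
  intro h
  cases e with
  | a =>
    exact absurd ((h (igOf x) (igOf y)).1 (withOne_eq_iff_map_toModel_eq.2 (by decide)))
      (mt withOne_eq_iff_map_toModel_eq.1 (by decide))
  | b =>
    exact absurd ((h 1 (igOf a)).1 (withOne_eq_iff_map_toModel_eq.2 (by decide)))
      (mt withOne_eq_iff_map_toModel_eq.1 (by decide))
  | x =>
    exact absurd ((h 1 (igOf b)).2 (withOne_eq_iff_map_toModel_eq.2 (by decide)))
      (mt withOne_eq_iff_map_toModel_eq.1 (by decide))
  | y =>
    exact absurd ((h 1 (igOf b)).2 (withOne_eq_iff_map_toModel_eq.2 (by decide)))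
      (mt withOne_eq_iff_map_toModel_eq.1 (by decide))

end B4

/-- `B4` is a band, and in `IG B4` the element `ā b̄` is not
`𝓡*`-related to any idempotent; in particular `IG B4` is not abundant. -/
theorem IG_B4_not_abundant :
    (∀ p : B4, p * p = p) ∧
    (¬ ∃ w : IG B4, IsIdempotentElem w ∧ RStar (igOf B4.a * igOf B4.b) w) ∧
    ¬ Abundant (IG B4) := by
  have hR : ¬ ∃ w : IG B4, IsIdempotentElem w ∧ RStar (igOf B4.a * igOf B4.b) w := by
    rintro ⟨w, hw, hR⟩
    obtain ⟨e, rfl⟩ := B4.exists_eq_igOf_of_isIdempotentElem hw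
    exact B4.not_rStar_igOf_mul_igOf e hR
  exact ⟨by decide, hR, fun h => hR (h _).1⟩
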